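/- If a graph G has highway dimension k according to the witness-based definition of Abraham et al. 2010 (for all r > 0 and all vertices v there is a set of at most k vertices hitting all r-significant shortest paths that are (r,2r)-close to v), then G has highway dimension at most k(k+1) according to Definition 1 with c = 4 and violation λ = 0: for every r > 0 and every ball B_{4r}(v), there is a set of at most k(k+1) vertices hitting all shortest paths that lie inside B_{4r}(v) and have length more than r. -/

import Mathlib

open SimpleGraph

universe u

variable {V : Type u}

/-- The length of a walk in a graph `G` with edge lengths `len`. -/
noncomputable def wlen {G : SimpleGraph V} (len : V → V → ℝ) {u v : V} (w : G.Walk u v) : ℝ :=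
  (w.darts.map (fun e => len e.toProd.1 e.toProd.2)).sum

/-- A walk is a *shortest path* (w.r.t. the shortest-path metric `d`) if it is a
path whose total length equals the distance between its endpoints. -/
def IsShortestPath {G : SimpleGraph V} (len d : V → V → ℝ) {u v : V}
    (w : G.Walk u v) : Prop :=
  w.IsPath ∧ wlen len w = d u v

/-- `d` is the shortest-path metric of the graph `G` with edge lengths `len`:
it is a lower bound on the length of every walk, and for every pair of vertices it
is attained by some path (a shortest path). -/
def IsShortestPathMetric (G : SimpleGraph V) (len d : V → V → ℝ) : Prop :=
  (∀ (u v : V) (w : G.Walk u v), d u v ≤ wlen len w) ∧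
  (∀ u v : V, ∃ w : G.Walk u v, IsShortestPath len d w)

/-- The closed ball `B_r(v)` of radius `r` around `v` (w.r.t. `d`). -/
def cball (d : V → V → ℝ) (v : V) (r : ℝ) : Set V := {u | d u v ≤ r}

/-- A *shortest path cover* for scale `r` (with parameter `c`): a set of hubs
hitting every shortest path of length in `(r, c*r/2]`. -/
def IsSPC (G : SimpleGraph V) (len d : V → V → ℝ) (c r : ℝ) (H : Set V) : Prop :=
  ∀ (u v : V) (w : G.Walk u v), IsShortestPath len d w →
    r < wlen len w → wlen len w ≤ c * r / 2 → ∃ h ∈ H, h ∈ w.support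

/-- A minimal shortest path cover: no proper subset is a shortest path cover. -/
def IsMinimalSPC (G : SimpleGraph V) (len d : V → V → ℝ) (c r : ℝ) (H : Set V) : Prop :=
  IsSPC G len d c r H ∧ ∀ H' : Set V, H' ⊂ H → ¬ IsSPC G len d c r H'

/-- `H` is locally `s`-sparse for scale `r`: every ball of radius `c*r/2` contains
at most `s` vertices of `H`. -/
def LocallySparse (d : V → V → ℝ) (c r : ℝ) (s : ℕ) (H : Set V) : Prop :=
  ∀ v : V, (H ∩ cball d v (c * r / 2)).ncard ≤ s

/-- Definition 1: the highway dimension of `G` is at most `k` if for every scale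
`r > 0` and every ball of radius `c*r`, there are at most `k` vertices in the ball
hitting all shortest paths of length more than `r` that lie inside the ball. -/
def HighwayDimLE (G : SimpleGraph V) (len d : V → V → ℝ) (c : ℝ) (k : ℕ) : Prop :=
  ∀ r : ℝ, 0 < r → ∀ v : V, ∃ H : Set V, H ⊆ cball d v (c * r) ∧ H.ncard ≤ k ∧
    ∀ (a b : V) (w : G.Walk a b), IsShortestPath len d w →
      (∀ x ∈ w.support, x ∈ cball d v (c * r)) → r < wlen len w →
      ∃ h ∈ H, h ∈ w.support

/-- `P'` is an *`r`-witness* of the shortest path `P`: a shortest path of length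
more than `r` obtained from `P` by adding at most one vertex to each end. -/
def IsWitness {G : SimpleGraph V} (len d : V → V → ℝ) (r : ℝ)
    {a b : V} (P : G.Walk a b) {a' b' : V} (P' : G.Walk a' b') : Prop :=
  IsShortestPath len d P' ∧ r < wlen len P' ∧
    (P'.support = P.support ∨ P'.support = a' :: P.support ∨
     P'.support = P.support ++ [b'] ∨ P'.support = a' :: (P.support ++ [b']))

/-- The witness-based definition of highway dimension (Abraham et al. 2010):
for all `r > 0` and all vertices `v` there is a set of at most `k` vertices hitting
all `r`-significant shortest paths that are `(r, 2r)`-close to `v`. -/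
def WitnessHighwayDimLE (G : SimpleGraph V) (len d : V → V → ℝ) (k : ℕ) : Prop :=
  ∀ r : ℝ, 0 < r → ∀ v : V, ∃ H : Set V, H.ncard ≤ k ∧
    ∀ (a b : V) (P : G.Walk a b), IsShortestPath len d P →
      (∃ (a' b' : V) (P' : G.Walk a' b'),
        IsWitness len d r P P' ∧ ∃ x ∈ P'.support, d x v ≤ 2 * r) →
      ∃ h ∈ H, h ∈ P.support

/-!
Fix `r > 0` and a centre `v`. Every vertex `a` of `B_{4r}(v)` lies within `2r` of `v` or of a
hub `h` of a witness cover `T` of `v` at scale `2r`: walk along a shortest `a`–`v` path until its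
length first exceeds `2r`; this prefix is a `2r`-witness of the prefix without its last vertex,
and it starts at `a`, within `4r` of `v`. So a shortest path of length `> r` starting at `a` is
`(r, 2r)`-close to `v` or to some `h ∈ T`, and is hit by the scale-`r` cover of that vertex. The
union of the at most `k + 1` covers of `v` and of the hubs of `T` has at most `k (k + 1)` vertices.
-/

def HitsSignificantPathsNear (G : SimpleGraph V) (len d : V → V → ℝ) (r : ℝ) (v : V)
    (H : Set V) : Prop :=
  ∀ (a b : V) (P : G.Walk a b), IsShortestPath len d P →
    (∃ (a' b' : V) (P' : G.Walk a' b'),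
      IsWitness len d r P P' ∧ ∃ x ∈ P'.support, d x v ≤ 2 * r) →
    ∃ h ∈ H, h ∈ P.support

lemma Set.Finite.ncard_biUnion_le_mul {ι α : Type*} {t : Set ι} (ht : t.Finite)
    {s : ι → Set α} {k : ℕ} (hs : ∀ i ∈ t, (s i).ncard ≤ k) :
    (⋃ i ∈ t, s i).ncard ≤ t.ncard * k :=
  calc (⋃ i ∈ t, s i).ncard ≤ ∑ i ∈ ht.toFinset, (s i).ncard := by
        simpa using ht.toFinset.set_ncard_biUnion_le s
    _ ≤ ht.toFinset.card * k :=
        Finset.sum_le_card_nsmul _ _ _ fun i hi => hs i (ht.mem_toFinset.mp hi)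
    _ = t.ncard * k := by rw [Set.ncard_eq_toFinset_card t ht]

section ShortestPaths

variable {G : SimpleGraph V} {len d : V → V → ℝ}

@[simp] lemma wlen_nil {u : V} : wlen len (Walk.nil : G.Walk u u) = 0 := by
  simp [wlen]

@[simp] lemma wlen_cons {u v w : V} (h : G.Adj u v) (p : G.Walk v w) :
    wlen len (Walk.cons h p) = len u v + wlen len p := by
  simp [wlen]

@[simp] lemma wlen_append {u v w : V} (p : G.Walk u v) (q : G.Walk v w) :
    wlen len (p.append q) = wlen len p + wlen len q := by
  simp [wlen, Walk.darts_append]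

@[simp] lemma wlen_concat {u v w : V} (p : G.Walk u v) (h : G.Adj v w) :
    wlen len (p.concat h) = wlen len p + len v w := by
  simp [Walk.concat_eq_append]

namespace IsShortestPathMetric

variable (hd : IsShortestPathMetric G len d)
include hd

lemma dist_self_nonpos (u : V) : d u u ≤ 0 := by
  simpa using hd.1 u u Walk.nil

lemma dist_triangle (x y z : V) : d x z ≤ d x y + d y z := by
  obtain ⟨p, -, hp⟩ := hd.2 x y
  obtain ⟨q, -, hq⟩ := hd.2 y z
  simpa [hp, hq] using hd.1 x z (p.append q)

lemma dist_le_len_add {a b : V} (hab : G.Adj a b) (x : V) : d a x ≤ len a b + d b x := by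
  obtain ⟨q, -, hq⟩ := hd.2 b x
  simpa [hq] using hd.1 a x (Walk.cons hab q)

lemma isShortestPath_of_append {x y z : V} {p : G.Walk x y} {q : G.Walk y z}
    (hpq : IsShortestPath len d (p.append q)) :
    IsShortestPath len d p ∧ IsShortestPath len d q := by
  obtain ⟨hpath, hlen⟩ := hpq
  rw [wlen_append] at hlen
  have hp := hd.1 x y p
  have hq := hd.1 y z q
  have htri := hd.dist_triangle x y z
  exact ⟨⟨hpath.of_append_left, by linarith⟩, ⟨hpath.of_append_right, by linarith⟩⟩

lemma exists_edge_crossing {a z : V} (Q : G.Walk a z) {s : ℝ} (hs : 0 ≤ s)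
    (hQ : s < wlen len Q) :
    ∃ (y y' : V) (Q₁ : G.Walk a y) (e : G.Adj y y') (Q₂ : G.Walk y' z),
      (∀ x ∈ Q₁.support, d a x ≤ s) ∧ s < wlen len (Q₁.concat e) ∧
      (Q₁.concat e).append Q₂ = Q := by
  induction Q generalizing s with
  | nil => rw [wlen_nil] at hQ; linarith
  | @cons a b z e Q ih =>
    rw [wlen_cons] at hQ
    by_cases hcross : s < len a b
    · refine ⟨a, b, Walk.nil, e, Q, ?_, by simpa using hcross, rfl⟩
      simpa using (hd.dist_self_nonpos a).trans hs
    · rw [not_lt] at hcross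
      obtain ⟨y, y', Q₁, e', Q₂, hnear, hfar, rfl⟩ := ih (s := s - len a b) (by linarith)
        (by linarith)
      refine ⟨y, y', Walk.cons e Q₁, e', Q₂, ?_, ?_, rfl⟩
      · intro x hx
        rw [Walk.support_cons, List.mem_cons] at hx
        rcases hx with rfl | hx
        · exact (hd.dist_self_nonpos x).trans hs
        · linarith [hd.dist_le_len_add e x, hnear x hx]
      · rw [Walk.concat_cons, wlen_cons]
        linarith

end IsShortestPathMetric

namespace HitsSignificantPathsNear

variable {r : ℝ} {v : V} {H : Set V}

lemma hits_of_dist_le (hH : HitsSignificantPathsNear G len d r v H) {a b : V}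
    {P : G.Walk a b} (hP : IsShortestPath len d P) (hlong : r < wlen len P)
    (hav : d a v ≤ 2 * r) : ∃ h ∈ H, h ∈ P.support :=
  hH a b P hP ⟨a, b, P, ⟨hP, hlong, Or.inl rfl⟩, a, P.start_mem_support, hav⟩

lemma exists_dist_le (hd : IsShortestPathMetric G len d)
    (hT : HitsSignificantPathsNear G len d (2 * r) v H) {a : V} (hav : d a v ≤ 4 * r) :
    ∃ h ∈ insert v H, d a h ≤ 2 * r := by
  by_cases hnear : d a v ≤ 2 * r
  · exact ⟨v, Set.mem_insert v H, hnear⟩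
  rw [not_le] at hnear
  obtain ⟨Q, hQ⟩ := hd.2 a v
  obtain ⟨y, y', Q₁, e, Q₂, hQ₁near, hfar, hsplit⟩ :=
    hd.exists_edge_crossing Q (s := 2 * r) (by linarith) (by rw [hQ.2]; exact hnear)
  have hwit : IsShortestPath len d (Q₁.concat e) :=
    (hd.isShortestPath_of_append (hsplit ▸ hQ)).1
  have hQ₁ : IsShortestPath len d Q₁ :=
    (hd.isShortestPath_of_append (Walk.concat_eq_append Q₁ e ▸ hwit)).1
  obtain ⟨h, hhT, hhQ₁⟩ := hT a y Q₁ hQ₁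
    ⟨a, y', Q₁.concat e, ⟨hwit, hfar, Or.inr (Or.inr (Or.inl (Walk.support_concat Q₁ e)))⟩,
      a, (Q₁.concat e).start_mem_support, by linarith⟩
  exact ⟨h, Set.mem_insert_of_mem v hhT, hQ₁near h hhQ₁⟩

end HitsSignificantPathsNear

end ShortestPaths

theorem highwayDimLE_four_of_witnessHighwayDimLE [Finite V] {G : SimpleGraph V}
    {len d : V → V → ℝ} (hd : IsShortestPathMetric G len d) {k : ℕ}
    (hk : WitnessHighwayDimLE G len d k) : HighwayDimLE G len d 4 (k * (k + 1)) := by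
  intro r hr v
  choose F hFcard hFhit using hk r hr
  obtain ⟨T, hTcard, hThit⟩ := hk (2 * r) (by linarith) v
  refine ⟨(⋃ c ∈ insert v T, F c) ∩ cball d v (4 * r), Set.inter_subset_right, ?_, ?_⟩
  · calc ((⋃ c ∈ insert v T, F c) ∩ cball d v (4 * r)).ncard
        ≤ (⋃ c ∈ insert v T, F c).ncard := Set.ncard_inter_le_ncard_left _ _ (Set.toFinite _)
      _ ≤ (insert v T).ncard * k :=
        (Set.toFinite _).ncard_biUnion_le_mul fun c _ => hFcard c
      _ ≤ (T.ncard + 1) * k := Nat.mul_le_mul_right k (Set.ncard_insert_le v T)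
      _ ≤ k * (k + 1) := by rw [mul_comm]; gcongr
  · intro a b P hP hball hlong
    obtain ⟨c, hc, hac⟩ := HitsSignificantPathsNear.exists_dist_le hd hThit
      (hball a P.start_mem_support)
    obtain ⟨h, hhF, hhP⟩ :=
      HitsSignificantPathsNear.hits_of_dist_le (hFhit c) hP hlong hac
    exact ⟨h, ⟨Set.mem_biUnion hc hhF, hball h hhP⟩, hhP⟩

theorem statement17_general {V : Type} [Fintype V] (G : SimpleGraph V) (len d : V → V → ℝ)
    (hmetric : IsShortestPathMetric G len d)
    (k : ℕ) (hWHD : WitnessHighwayDimLE G len d k) :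
    ∀ r : ℝ, 0 < r → ∀ v : V,
      ∃ H : Set V, H ⊆ cball d v (4 * r) ∧ H.ncard ≤ k * (k + 1) ∧
        ∀ (a b : V) (P : G.Walk a b), IsShortestPath len d P →
          (∀ x ∈ P.support, x ∈ cball d v (4 * r)) → r < wlen len P →
          ∃ h ∈ H, h ∈ P.support :=
  highwayDimLE_four_of_witnessHighwayDimLE hmetric hWHD

/-- Lemma 44 of the paper: a graph of highway dimension `k`
according to the witness-based definition of Abraham et al. 2010 has highway
dimension at most `k * (k + 1)` according to Definition 1 with `c = 4` (violation
`λ = 0`): for every `r > 0` and every ball `B_{4r}(v)` there is a set of at most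
`k * (k + 1)` vertices hitting all shortest paths that lie inside `B_{4r}(v)` and
have length more than `r`. -/
theorem statement17 {V : Type} [Fintype V] (G : SimpleGraph V) (len d : V → V → ℝ)
    (hlen_symm : ∀ u v : V, len u v = len v u)
    (hlen_pos : ∀ u v : V, G.Adj u v → 0 < len u v)
    (hmetric : IsShortestPathMetric G len d)
    (k : ℕ) (hWHD : WitnessHighwayDimLE G len d k) :
    ∀ r : ℝ, 0 < r → ∀ v : V,
      ∃ H : Set V, H ⊆ cball d v (4 * r) ∧ H.ncard ≤ k * (k + 1) ∧
        ∀ (a b : V) (P : G.Walk a b), IsShortestPath len d P →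
          (∀ x ∈ P.support, x ∈ cball d v (4 * r)) → r < wlen len P →
          ∃ h ∈ H, h ∈ P.support :=
  statement17_general G len d hmetric k hWHD
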